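/- Let R be a Poisson algebra over an arbitrary field K. Then for all integers n, m ≥ 2, γ_m(R)·γ_n(R) ⊆ γ_{m+n−2}(R)·R. -/
import Mathlib

/-- The lower central series of a Poisson algebra `R` with bracket `P`:
`γ 0 = R` (corresponding to `γ_1`) and `γ (n+1)` is the `K`-span of all brackets `{a, b}`
with `a ∈ γ n`, `b ∈ R`. -/
def poissonLowerCentralSeries (K R : Type*) [Field K] [CommRing R] [Algebra K R]
    (P : R →ₗ[K] R →ₗ[K] R) : ℕ → Submodule K R
  | 0 => ⊤
  | n + 1 => Submodule.span K
      {x : R | ∃ a ∈ poissonLowerCentralSeries K R P n, ∃ b : R, x = P a b}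

section Aux

variable {K R : Type*} [Field K] [CommRing R] [Algebra K R]
    (P : R →ₗ[K] R →ₗ[K] R)
    (halt : ∀ a, P a a = 0)
    (hjac : ∀ a b c, P a (P b c) = P (P a b) c + P b (P a c))
    (hleib : ∀ a b c, P (a * b) c = a * P b c + b * P a c)

local notation "G" => poissonLowerCentralSeries K R P

lemma pg_succ (n : ℕ) :
    G (n + 1) = Submodule.span K {x : R | ∃ a ∈ G n, ∃ b : R, x = P a b} := rfl

include halt in
lemma pg_anti (a b : R) : P a b = - P b a := by
  have h := halt (a + b)
  simp only [map_add, LinearMap.add_apply, halt a, halt b, zero_add, add_zero] at h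
  exact eq_neg_of_add_eq_zero_left (by rw [add_comm] at h; exact h)

lemma pg_zero : G 0 = ⊤ := rfl

lemma pg_mem_zero (x : R) : x ∈ G 0 := by rw [pg_zero]; exact Submodule.mem_top

lemma pg_mem_succ {i : ℕ} {a : R} (ha : a ∈ G i) (b : R) : P a b ∈ G (i + 1) :=
  Submodule.subset_span ⟨a, ha, b, rfl⟩

lemma pg_antitone : ∀ i, G (i + 1) ≤ G i := by
  intro i
  induction i with
  | zero => exact le_top
  | succ i ih =>
      rw [pg_succ, pg_succ]
      apply Submodule.span_mono
      rintro x ⟨a, ha, b, rfl⟩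
      exact ⟨a, ih ha, b, rfl⟩

include halt hjac in
/-- `{γ_{i}, γ_2} ⊆ γ_{i+2}` (Lean indices: `{G i, G 1} ⊆ G (i+2)`). -/
lemma pg_bracket2 {i : ℕ} {w g : R} (hw : w ∈ G i) (hg : g ∈ G 1) :
    P w g ∈ G (i + 2) := by
  induction hg using Submodule.span_induction with
  | mem x h =>
      obtain ⟨a, -, b, rfl⟩ := h
      rw [hjac w a b]
      refine add_mem (pg_mem_succ P (pg_mem_succ P hw a) b) ?_
      rw [pg_anti P halt a (P w b)]
      exact neg_mem (pg_mem_succ P (pg_mem_succ P hw b) a)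
  | zero => simp
  | add x y hx hy ihx ihy => rw [map_add]; exact add_mem ihx ihy
  | smul a x hx ih => rw [map_smul]; exact Submodule.smul_mem _ a ih

/-- The auxiliary submodule `U j = γ_{j+1} + γ_{j+1}·γ_2 + γ_{j+2}·R` (subscript convention). -/
def pgU (j : ℕ) : Submodule K R := G j ⊔ G j * G 1 ⊔ G (j + 1) * ⊤

include halt hjac hleib in
/-- Key lemma: `γ_{k}·γ_3 ⊆ γ_{k+1} + γ_{k+1}·γ_2 + γ_{k+2}·R` for `k ≥ 2`. -/
lemma pg_key (j : ℕ) : G (j + 1) * G 2 ≤ pgU P (j + 2) := by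
  rw [Submodule.mul_le]
  intro u hu v hv
  induction hv using Submodule.span_induction with
  | mem x h =>
      obtain ⟨g, hg, d, rfl⟩ := h
      induction hu using Submodule.span_induction with
      | mem y hy =>
          obtain ⟨w, hw, c, rfl⟩ := hy
          have e1 : P w (c * g) = c * P w g + g * P w c := by
            rw [pg_anti P halt w (c * g), hleib c g w, pg_anti P halt g w,
              pg_anti P halt c w]
            ring
          have e2 : P w c * P g d
              = P (P w (c * g)) d - P (P w g) d * c - P w g * P c d
                - P (P w c) d * g := by
            rw [e1, map_add, LinearMap.add_apply, hleib c (P w g) d,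
              hleib g (P w c) d]
            ring
          rw [e2]
          have m1 : P (P w (c * g)) d ∈ G (j + 2) :=
            pg_mem_succ P (pg_mem_succ P hw (c * g)) d
          have m2 : P (P w g) d * c ∈ G (j + 3) * ⊤ :=
            Submodule.mul_mem_mul
              (pg_mem_succ P (pg_bracket2 P halt hjac hw hg) d) Submodule.mem_top
          have m3 : P w g * P c d ∈ G (j + 2) * G 1 :=
            Submodule.mul_mem_mul (pg_bracket2 P halt hjac hw hg)
              (pg_mem_succ P (pg_mem_zero P c) d)
          have m4 : P (P w c) d * g ∈ G (j + 2) * G 1 :=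
            Submodule.mul_mem_mul (pg_mem_succ P (pg_mem_succ P hw c) d) hg
          exact sub_mem (sub_mem (sub_mem
            (Submodule.mem_sup_left (Submodule.mem_sup_left m1))
            (Submodule.mem_sup_right m2))
            (Submodule.mem_sup_left (Submodule.mem_sup_right m3)))
            (Submodule.mem_sup_left (Submodule.mem_sup_right m4))
      | zero => simp
      | add y z hy hz ihy ihz => rw [add_mul]; exact add_mem ihy ihz
      | smul a y hy ih => rw [smul_mul_assoc]; exact Submodule.smul_mem _ a ih
  | zero => simp
  | add x y hx hy ihx ihy => rw [mul_add]; exact add_mem ihx ihy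
  | smul a x hx ih => rw [mul_smul_comm]; exact Submodule.smul_mem _ a ih

include halt hjac hleib in
/-- The chain `U` is stable under bracketing with arbitrary elements. -/
lemma pg_closure (j : ℕ) {x : R} (hx : x ∈ pgU P (j + 1)) (c : R) :
    P x c ∈ pgU P (j + 2) := by
  obtain ⟨y, hy, z, hz, rfl⟩ := Submodule.mem_sup.1 hx
  obtain ⟨y1, hy1, y2, hy2, rfl⟩ := Submodule.mem_sup.1 hy
  rw [map_add, map_add, LinearMap.add_apply, LinearMap.add_apply]
  have c1 : P y1 c ∈ pgU P (j + 2) :=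
    Submodule.mem_sup_left (Submodule.mem_sup_left (pg_mem_succ P hy1 c))
  have c2 : P y2 c ∈ pgU P (j + 2) := by
    refine Submodule.mul_induction_on (C := fun t => P t c ∈ pgU P (j + 2)) hy2
      (fun m hm n hn => ?_) (fun x y hx hy => ?_)
    · show P (m * n) c ∈ pgU P (j + 2)
      have e : P (m * n) c = m * P n c + P m c * n := by rw [hleib m n c]; ring
      rw [e]
      refine add_mem (pg_key P halt hjac hleib j
        (Submodule.mul_mem_mul hm (pg_mem_succ P hn c))) ?_
      exact Submodule.mem_sup_left (Submodule.mem_sup_right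
        (Submodule.mul_mem_mul (pg_mem_succ P hm c) hn))
    · show P (x + y) c ∈ pgU P (j + 2)
      rw [map_add, LinearMap.add_apply]; exact add_mem hx hy
  have c3 : P z c ∈ pgU P (j + 2) := by
    refine Submodule.mul_induction_on (C := fun t => P t c ∈ pgU P (j + 2)) hz
      (fun m hm n hn => ?_) (fun x y hx hy => ?_)
    · show P (m * n) c ∈ pgU P (j + 2)
      have e : P (m * n) c = m * P n c + P m c * n := by rw [hleib m n c]; ring
      rw [e]
      refine add_mem (Submodule.mem_sup_left (Submodule.mem_sup_right
        (Submodule.mul_mem_mul hm (pg_mem_succ P (pg_mem_zero P n) c)))) ?_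
      exact Submodule.mem_sup_right
        (Submodule.mul_mem_mul (pg_mem_succ P hm c) Submodule.mem_top)
    · show P (x + y) c ∈ pgU P (j + 2)
      rw [map_add, LinearMap.add_apply]; exact add_mem hx hy
  exact add_mem (add_mem c1 c2) c3

include halt hjac hleib in
/-- Main induction: `γ_{a+2}·γ_{b+2} ⊆ U_{a+b+2}` in subscript convention. -/
lemma pg_main : ∀ b a : ℕ, G (a + 1) * G (b + 1) ≤ pgU P (a + b + 1) := by
  intro b
  induction b with
  | zero => exact fun a => le_sup_right.trans le_sup_left
  | succ b ih =>
      intro a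
      rw [Submodule.mul_le]
      intro u hu v hv
      induction hv using Submodule.span_induction with
      | mem x h =>
          obtain ⟨w, hw, c, rfl⟩ := h
          have h2 : P (u * w) c ∈ pgU P (a + b + 2) :=
            pg_closure P halt hjac hleib (a + b) (ih a (Submodule.mul_mem_mul hu hw)) c
          have h3 : P u c * w ∈ pgU P (a + b + 2) := by
            have := ih (a + 1) (Submodule.mul_mem_mul (pg_mem_succ P hu c) hw)
            rwa [show a + 1 + b + 1 = a + b + 2 by omega] at this
          have e : u * P w c = P (u * w) c - P u c * w := by rw [hleib u w c]; ring
          rw [show a + (b + 1) + 1 = a + b + 2 by omega, e]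
          exact sub_mem h2 h3
      | zero => simp
      | add x y hx hy ihx ihy => rw [mul_add]; exact add_mem ihx ihy
      | smul t x hx ihx => rw [mul_smul_comm]; exact Submodule.smul_mem _ t ihx

lemma pgU_le (j : ℕ) : pgU P j ≤ G j * ⊤ := by
  refine sup_le (sup_le ?_ ?_) ?_
  · intro x hx
    have := Submodule.mul_mem_mul hx (Submodule.mem_top (x := (1 : R)))
    rwa [mul_one] at this
  · rw [Submodule.mul_le]
    intro m hm n _
    exact Submodule.mul_mem_mul hm Submodule.mem_top
  · rw [Submodule.mul_le]
    intro m hm n hn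
    exact Submodule.mul_mem_mul (pg_antitone P j hm) hn

end Aux
/-- Monteiro Alves–Petrogradsky: let `R` be a Poisson algebra (with bracket `P`) over an
arbitrary field `K`.  Then for all `n, m ≥ 2`, `γ_m(R) · γ_n(R) ⊆ γ_{m+n-2}(R) · R`
(here `γ_j(R) = poissonLowerCentralSeries K R P (j-1)`). -/
theorem poisson_gamma_mul_gamma_subset_weak
    {K R : Type*} [Field K] [CommRing R] [Algebra K R]
    (P : R →ₗ[K] R →ₗ[K] R)
    (halt : ∀ a, P a a = 0)
    (hjac : ∀ a b c, P a (P b c) = P (P a b) c + P b (P a c))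
    (hleib : ∀ a b c, P (a * b) c = a * P b c + b * P a c)
    (n m : ℕ) (hn : 2 ≤ n) (hm : 2 ≤ m) :
    poissonLowerCentralSeries K R P (m - 1) * poissonLowerCentralSeries K R P (n - 1) ≤
      poissonLowerCentralSeries K R P (m + n - 3) * ⊤ := by
  obtain ⟨m', rfl⟩ : ∃ m', m = m' + 2 := ⟨m - 2, by omega⟩
  obtain ⟨n', rfl⟩ : ∃ n', n = n' + 2 := ⟨n - 2, by omega⟩
  rw [show m' + 2 - 1 = m' + 1 by omega, show n' + 2 - 1 = n' + 1 by omega,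
    show m' + 2 + (n' + 2) - 3 = m' + n' + 1 by omega]
  exact (pg_main P halt hjac hleib n' m').trans (pgU_le P (m' + n' + 1))
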